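/- Let ĥ ~ CN(0, ω) be a scalar circularly symmetric complex Gaussian with variance ω > 0, and a, b ≥ 0 with a > b. Then E[ln((1 + a|ĥ|²)/(1 + b|ĥ|²))] = e^{1/(ωa)}E₁(1/(ωa)) − e^{1/(ωb)}E₁(1/(ωb)), with the convention that the second term is 0 when b = 0. -/

import Mathlib

/-!
`X = |ĥ|²` has density `r e^{-rx}` on `(0, ∞)` with `r = 1/ω`, and the logarithm of the ratio
splits as `log (1 + aX) - log (1 + bX)`. For `c > 0`, integrating by parts against the density
turns `E[log (1 + cX)]` into `∫₀^∞ c e^{-rx} / (1 + cx) dx`, and the substitution `u = 1 + cx`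
identifies this with `e^{r/c} E₁(r/c)`.
-/

open MeasureTheory ProbabilityTheory

/-- The exponential integral `E₁(z) = ∫₁^∞ e^{−zu}/u du`. -/
noncomputable def expIntE1 (z : ℝ) : ℝ := ∫ u in Set.Ioi (1 : ℝ), Real.exp (-z * u) / u

open Real Set Filter
open scoped Topology

lemma integral_expMeasure {r : ℝ} (hr : 0 ≤ r) (g : ℝ → ℝ) :
    ∫ x, g x ∂expMeasure r = ∫ x in Ioi 0, r * exp (-r * x) * g x := by
  change ∫ x, g x ∂volume.withDensity (fun x => ((gammaPDFReal 1 r x).toNNReal : ENNReal)) = _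
  rw [integral_withDensity_eq_integral_smul (measurable_gammaPDFReal 1 r).real_toNNReal,
    ← integral_Ici_eq_integral_Ioi, ← integral_indicator measurableSet_Ici]
  congr 1 with x
  by_cases hx : 0 ≤ x
  · simp [NNReal.smul_def, gammaPDFReal, hx]
    exact .inl (by positivity)
  · simp [gammaPDFReal, hx]

lemma expIntE1_zero : expIntE1 0 = 0 :=
  integral_undef fun h => not_integrableOn_Ioi_inv <|
    IntegrableOn.congr_fun h (fun u _ => by simp) measurableSet_Ioi

lemma exp_mul_expIntE1 (z : ℝ) :
    exp z * expIntE1 z = ∫ t in Ioi 0, exp (-z * t) / (1 + t) := by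
  have hshift := (measurePreserving_add_right volume (1 : ℝ)).setIntegral_preimage_emb
    (measurableEmbedding_addRight 1) (fun u => exp (-z * u) / u) (Ioi 1)
  rw [preimage_add_const_Ioi, sub_self] at hshift
  rw [expIntE1, ← hshift, ← integral_const_mul]
  refine setIntegral_congr_fun measurableSet_Ioi fun t _ => ?_
  rw [mul_div_assoc', ← exp_add, add_comm t]
  ring_nf

lemma integral_div_one_add_mul_mul_exp {c : ℝ} (hc : 0 < c) (l : ℝ) :
    ∫ x in Ioi 0, c / (1 + c * x) * exp (-l * x) = exp (l / c) * expIntE1 (l / c) := by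
  rw [exp_mul_expIntE1]
  conv_rhs => rw [← mul_zero c, ← integral_comp_mul_left_Ioi' _ _ hc, smul_eq_mul,
    ← integral_const_mul]
  refine setIntegral_congr_fun measurableSet_Ioi fun x _ => ?_
  field_simp

lemma log_one_add_mul_mem_Icc {c x : ℝ} (hc : 0 ≤ c) (hx : 0 ≤ x) :
    log (1 + c * x) ∈ Icc 0 (c * x) := by
  have hcx : 0 ≤ c * x := mul_nonneg hc hx
  exact ⟨log_nonneg (by linarith),
    by linarith [log_le_sub_one_of_pos (by linarith : 0 < 1 + c * x)]⟩

lemma integrableOn_mul_exp_neg_mul {l : ℝ} (hl : 0 < l) :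
    IntegrableOn (fun x => x * exp (-l * x)) (Ioi 0) := by
  simpa using integrableOn_rpow_mul_exp_neg_mul_rpow (s := 1) (p := 1) (by norm_num) one_pos hl

section ExpWeighted

variable {l c : ℝ}

lemma integrableOn_mul_exp_mul_log_one_add_mul (hl : 0 < l) (hc : 0 ≤ c) :
    IntegrableOn (fun x => l * exp (-l * x) * log (1 + c * x)) (Ioi 0) := by
  refine ((integrableOn_mul_exp_neg_mul hl).const_mul (l * c)).mono' (by fun_prop) ?_
  filter_upwards [ae_restrict_mem measurableSet_Ioi] with x (hx : 0 < x)
  obtain ⟨hlog_nonneg, hlog_le⟩ := log_one_add_mul_mem_Icc hc hx.le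
  rw [norm_of_nonneg (by positivity)]
  calc l * exp (-l * x) * log (1 + c * x) ≤ l * exp (-l * x) * (c * x) := by gcongr
    _ = l * c * (x * exp (-l * x)) := by ring

lemma integrableOn_div_one_add_mul_mul_exp (hl : 0 < l) (hc : 0 ≤ c) :
    IntegrableOn (fun x => c / (1 + c * x) * exp (-l * x)) (Ioi 0) := by
  refine ((exp_neg_integrableOn_Ioi 0 hl).const_mul c).mono' (by fun_prop) ?_
  filter_upwards [ae_restrict_mem measurableSet_Ioi] with x (hx : 0 < x)
  rw [norm_of_nonneg (by positivity)]
  gcongr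
  exact div_le_self hc (le_add_of_nonneg_right (by positivity))

lemma tendsto_exp_mul_log_one_add_mul (hl : 0 < l) (hc : 0 ≤ c) :
    Tendsto (fun x => exp (-l * x) * log (1 + c * x)) atTop (𝓝 0) := by
  have hbound : Tendsto (fun x => c * (x * exp (-l * x))) atTop (𝓝 0) := by
    simpa using (tendsto_rpow_mul_exp_neg_mul_atTop_nhds_zero 1 l hl).const_mul c
  refine tendsto_of_tendsto_of_tendsto_of_le_of_le' tendsto_const_nhds hbound ?_ ?_
  all_goals
    filter_upwards [eventually_ge_atTop 0] with x hx
    obtain ⟨hlog_nonneg, hlog_le⟩ := log_one_add_mul_mem_Icc hc hx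
  · positivity
  · calc exp (-l * x) * log (1 + c * x) ≤ exp (-l * x) * (c * x) := by gcongr
      _ = c * (x * exp (-l * x)) := by ring

lemma integral_mul_exp_mul_log_one_add_mul_eq (hl : 0 < l) (hc : 0 ≤ c) :
    ∫ x in Ioi 0, l * exp (-l * x) * log (1 + c * x) =
      ∫ x in Ioi 0, c / (1 + c * x) * exp (-l * x) := by
  have hderiv : ∀ x ∈ Ici (0 : ℝ), HasDerivAt (fun x => -(exp (-l * x) * log (1 + c * x)))
      (l * exp (-l * x) * log (1 + c * x) - c / (1 + c * x) * exp (-l * x)) x := by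
    intro x (hx : 0 ≤ x)
    have hlog : HasDerivAt (fun x => log (1 + c * x)) (c / (1 + c * x)) x := by
      simpa using (((hasDerivAt_id x).const_mul c).const_add 1).log (by positivity)
    have hexp : HasDerivAt (fun x => exp (-l * x)) (exp (-l * x) * -l) x := by
      simpa using ((hasDerivAt_id x).const_mul (-l)).exp
    exact (hexp.mul hlog).neg.congr_deriv (by ring)
  have hint₁ := integrableOn_mul_exp_mul_log_one_add_mul hl hc
  have hint₂ := integrableOn_div_one_add_mul_mul_exp hl hc
  have hftc := integral_Ioi_of_hasDerivAt_of_tendsto' hderiv (hint₁.sub hint₂)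
    (tendsto_exp_mul_log_one_add_mul hl hc).neg
  rw [integral_sub hint₁ hint₂] at hftc
  simpa [sub_eq_zero] using hftc

lemma integral_mul_exp_mul_log_one_add_mul (hl : 0 < l) (hc : 0 ≤ c) :
    ∫ x in Ioi 0, l * exp (-l * x) * log (1 + c * x) = exp (l / c) * expIntE1 (l / c) := by
  rcases hc.eq_or_lt with rfl | hc
  -- both sides vanish at `c = 0`, the right one through the junk values `l / 0 = 0`
  -- and `expIntE1 0 = 0` (a divergent integral)
  · simp [expIntE1_zero]
  · rw [integral_mul_exp_mul_log_one_add_mul_eq hl hc.le, integral_div_one_add_mul_mul_exp hc]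

end ExpWeighted

/-- For `ĥ ~ CN(0,ω)` scalar (so that `|ĥ|²` is exponentially distributed with
mean `ω`) and `a > b ≥ 0`,
`E[ln((1 + a|ĥ|²)/(1 + b|ĥ|²))] = e^{1/(ωa)}E₁(1/(ωa)) − e^{1/(ωb)}E₁(1/(ωb))`
(the second term being `0` when `b = 0`, which holds automatically here since
`1/0 = 0` and `E₁(0)`'s defining integral diverges, giving value `0`). -/
theorem cn_log_ratio_expectation
    {Ω : Type*} [MeasurableSpace Ω] (μ : Measure Ω) [IsProbabilityMeasure μ]
    (hhat : Ω → ℂ) (w a b : ℝ) (hw : 0 < w) (hb : 0 ≤ b) (hab : b < a)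
    (hlaw : MeasureTheory.Measure.map (fun ω => Complex.normSq (hhat ω)) μ =
      expMeasure (1 / w)) :
    ∫ ω, Real.log ((1 + a * Complex.normSq (hhat ω)) /
        (1 + b * Complex.normSq (hhat ω))) ∂μ =
      Real.exp (1 / (w * a)) * expIntE1 (1 / (w * a)) -
        Real.exp (1 / (w * b)) * expIntE1 (1 / (w * b)) := by
  have ha : 0 ≤ a := hb.trans hab.le
  have hr : 0 < 1 / w := by positivity
  have hX : AEMeasurable (fun ω => Complex.normSq (hhat ω)) μ := .of_map_ne_zero <| by
    rw [hlaw]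
    exact (isProbabilityMeasure_expMeasure hr).ne_zero
  have hg : Measurable fun x => log ((1 + a * x) / (1 + b * x)) := by fun_prop
  rw [← integral_map hX hg.aestronglyMeasurable, hlaw, integral_expMeasure hr.le]
  calc _ = ∫ x in Ioi 0, (1 / w * exp (-(1 / w) * x) * log (1 + a * x) -
          1 / w * exp (-(1 / w) * x) * log (1 + b * x)) := by
        refine setIntegral_congr_fun measurableSet_Ioi fun x (hx : 0 < x) => ?_
        rw [log_div (by positivity) (by positivity)]
        ring
    _ = _ := by
      rw [integral_sub (integrableOn_mul_exp_mul_log_one_add_mul hr ha)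
          (integrableOn_mul_exp_mul_log_one_add_mul hr hb),
        integral_mul_exp_mul_log_one_add_mul hr ha, integral_mul_exp_mul_log_one_add_mul hr hb,
        div_div, div_div]
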